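/- The restriction of F(b) = φ(b)/Φ(−b) − b to the interval (0, ∞) is a continuous bijection from (0, ∞) onto the open interval (0, 2/√(2π)). -/

import Mathlib

/-!
Write `Q b = Phi (-b)`, so that `Q' = -phi` and `phi' b = -b * phi b`. The functions
`g = phi - b Q`, `k = (b² + 1) Q - b phi` and `m = Q (b phi + Q) - phi²` all tend to `0` at `∞`
and satisfy `g' = -Q`, `k' = -2 g`, `m' = -phi k`; so each in turn is strictly decreasing, hence
positive, on `[0, ∞)`. Positivity of `g` gives `F > 0`, that of `k` gives `F b < 1 / b`, and that
of `m` gives `F' = -m / Q² < 0`. Thus `F` decreases strictly and continuously from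
`F 0 = 2 phi 0 = 2 / √(2π)` to `0`. The limits at `∞` all follow from the tail bound
`b Q b ≤ ∫_b^∞ t phi t dt = phi b`.
-/

open MeasureTheory Filter

/-- Standard normal density. -/
noncomputable def phi (x : ℝ) : ℝ := Real.exp (-x ^ 2 / 2) / Real.sqrt (2 * Real.pi)

/-- Standard normal cumulative distribution function. -/
noncomputable def Phi (x : ℝ) : ℝ := ∫ t in Set.Iio x, phi t

/-- Mills-type ratio. -/
noncomputable def r (b : ℝ) : ℝ := phi b / Phi (-b)

/-- The deficit transformation `F`. -/
noncomputable def F (b : ℝ) : ℝ := phi b / Phi (-b) - b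

open Set ProbabilityTheory
open scoped Topology

section Monotone

variable {f f' : ℝ → ℝ} {a l : ℝ}

lemma StrictAntiOn.lt_of_tendsto_atTop (hf : StrictAntiOn f (Ici a))
    (hl : Tendsto f atTop (𝓝 l)) {b : ℝ} (hb : a ≤ b) : l < f b := by
  have hb' : b + 1 ∈ Ici a := by simp only [mem_Ici]; linarith
  calc l ≤ f (b + 1) := le_of_tendsto hl <| by
        filter_upwards [eventually_ge_atTop (b + 1)] with x hx
        exact hf.antitoneOn hb' (le_trans hb' hx) hx
    _ < f b := hf hb hb' (lt_add_one b)

lemma strictAntiOn_Ici_of_hasDerivAt_neg (hf : ∀ x, HasDerivAt f (f' x) x)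
    (hf' : ∀ x, a < x → f' x < 0) : StrictAntiOn f (Ici a) :=
  strictAntiOn_of_hasDerivWithinAt_neg (convex_Ici a)
    (fun x _ => (hf x).continuousAt.continuousWithinAt)
    (fun x _ => (hf x).hasDerivWithinAt)
    (fun x hx => hf' x (by rwa [interior_Ici] at hx))

lemma pos_of_hasDerivAt_neg_of_tendsto_zero (hf : ∀ x, HasDerivAt f (f' x) x)
    (hf' : ∀ x, a < x → f' x < 0) (hl : Tendsto f atTop (𝓝 0)) {b : ℝ} (hb : a ≤ b) :
    0 < f b :=
  (strictAntiOn_Ici_of_hasDerivAt_neg hf hf').lt_of_tendsto_atTop hl hb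

lemma StrictAntiOn.bijOn_Ioi_Ioo (hc : ContinuousOn f (Ici a)) (hf : StrictAntiOn f (Ici a))
    (hl : Tendsto f atTop (𝓝 l)) : BijOn f (Ioi a) (Ioo l (f a)) := by
  refine ⟨fun b hb => ⟨hf.lt_of_tendsto_atTop hl hb.le,
    hf self_mem_Ici (Ioi_subset_Ici_self hb) hb⟩, hf.injOn.mono Ioi_subset_Ici_self, fun y hy => ?_⟩
  obtain ⟨B, hfB, haB⟩ := ((hl.eventually (gt_mem_nhds hy.1)).and (eventually_gt_atTop a)).exists
  obtain ⟨x, hx, rfl⟩ :=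
    intermediate_value_Ioo' haB.le (hc.mono Icc_subset_Ici_self) ⟨hfB, hy.2⟩
  exact ⟨x, hx.1, rfl⟩

end Monotone

lemma phi_eq_gaussianPDFReal : phi = gaussianPDFReal 0 1 := by
  ext x
  simp [phi, gaussianPDFReal, div_eq_inv_mul]

lemma phi_pos (x : ℝ) : 0 < phi x := by unfold phi; positivity

lemma phi_neg (x : ℝ) : phi (-x) = phi x := by simp [phi]

lemma phi_zero : phi 0 = 1 / Real.sqrt (2 * Real.pi) := by simp [phi]

lemma continuous_phi : Continuous phi := by unfold phi; fun_prop

lemma integrable_phi : Integrable phi :=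
  phi_eq_gaussianPDFReal ▸ integrable_gaussianPDFReal 0 1

lemma integral_phi : ∫ x, phi x = 1 := by
  rw [phi_eq_gaussianPDFReal]
  exact integral_gaussianPDFReal_eq_one 0 one_ne_zero

lemma hasDerivAt_phi (x : ℝ) : HasDerivAt phi (-x * phi x) x := by
  have h : HasDerivAt (fun y : ℝ => -y ^ 2 / 2) (-x) x := by
    simpa [neg_div] using (hasDerivAt_pow 2 x).neg.div_const 2
  exact (h.exp.div_const _).congr_deriv (by rw [phi]; ring)

lemma integrable_mul_phi : Integrable (fun t => t * phi t) := by
  refine ((integrable_mul_exp_neg_mul_sq (by norm_num : (0:ℝ) < 1/2)).div_const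
    (Real.sqrt (2 * Real.pi))).congr (ae_of_all _ fun x => ?_)
  simp only [phi]; ring_nf

lemma tendsto_pow_mul_phi_atTop (n : ℕ) : Tendsto (fun x => x ^ n * phi x) atTop (𝓝 0) := by
  have h := ((tendsto_rpow_abs_mul_exp_neg_mul_sq_cocompact (by norm_num : (0:ℝ) < 1/2) n).mono_left
    atTop_le_cocompact).div_const (Real.sqrt (2 * Real.pi))
  rw [zero_div] at h
  refine h.congr' ?_
  filter_upwards [eventually_ge_atTop 0] with x hx
  rw [abs_of_nonneg hx, Real.rpow_natCast, phi]
  ring_nf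

lemma tendsto_phi_atTop : Tendsto phi atTop (𝓝 0) := by
  simpa using tendsto_pow_mul_phi_atTop 0

lemma Phi_pos (x : ℝ) : 0 < Phi x := by
  rw [Phi, setIntegral_pos_iff_support_of_nonneg_ae (ae_of_all _ fun y => (phi_pos y).le)
    integrable_phi.integrableOn,
    (eq_univ_of_forall fun y => (phi_pos y).ne' : Function.support phi = univ), univ_inter]
  simp [Real.volume_Iio]

lemma Phi_eq_integral_Iic (x : ℝ) : Phi x = ∫ t in Iic x, phi t :=
  integral_Iic_eq_integral_Iio.symm

lemma Phi_neg_eq_integral_Ioi (b : ℝ) : Phi (-b) = ∫ t in Ioi b, phi t := by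
  rw [Phi_eq_integral_Iic, ← integral_comp_neg_Ioi]
  simp [phi_neg]

lemma Phi_add_Phi_neg (b : ℝ) : Phi b + Phi (-b) = 1 := by
  rw [Phi_eq_integral_Iic, Phi_neg_eq_integral_Ioi, intervalIntegral.integral_Iic_add_Ioi
    integrable_phi.integrableOn integrable_phi.integrableOn, integral_phi]

lemma Phi_zero : Phi 0 = 1 / 2 := by
  linarith [neg_zero (G := ℝ) ▸ Phi_add_Phi_neg 0]

lemma hasDerivAt_Phi (x : ℝ) : HasDerivAt Phi (phi x) x := by
  have h := (intervalIntegral.integral_hasDerivAt_right (continuous_phi.intervalIntegrable 0 x)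
    (continuous_phi.stronglyMeasurableAtFilter _ _) continuous_phi.continuousAt).const_add (Phi 0)
  have hPhi : Phi = fun u => Phi 0 + ∫ t in 0..u, phi t := by
    funext u
    rw [Phi_eq_integral_Iic, Phi_eq_integral_Iic, ← intervalIntegral.integral_Iic_sub_Iic
      integrable_phi.integrableOn integrable_phi.integrableOn]
    ring
  rwa [hPhi]

lemma hasDerivAt_Phi_neg (b : ℝ) : HasDerivAt (fun x => Phi (-x)) (-phi b) b := by
  simpa [phi_neg, Function.comp_def] using (hasDerivAt_Phi (-b)).comp b (hasDerivAt_neg b)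

lemma integral_Ioi_mul_phi (b : ℝ) : ∫ t in Ioi b, t * phi t = phi b := by
  have h := integral_Ioi_of_hasDerivAt_of_tendsto (f := fun t => -phi t) (a := b)
    continuous_phi.neg.continuousWithinAt
    (fun x _ => (hasDerivAt_phi x).neg.congr_deriv (by ring)) integrable_mul_phi.integrableOn
    (by simpa using tendsto_phi_atTop.neg)
  simpa using h

lemma mul_Phi_neg_le_phi (b : ℝ) : b * Phi (-b) ≤ phi b :=
  calc b * Phi (-b) = ∫ t in Ioi b, b * phi t := by
        rw [Phi_neg_eq_integral_Ioi, integral_const_mul]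
    _ ≤ ∫ t in Ioi b, t * phi t :=
        setIntegral_mono_on (integrable_phi.integrableOn.const_mul b)
          integrable_mul_phi.integrableOn measurableSet_Ioi
          fun t ht => mul_le_mul_of_nonneg_right (le_of_lt ht) (phi_pos t).le
    _ = phi b := integral_Ioi_mul_phi b

lemma tendsto_pow_mul_Phi_neg_atTop (n : ℕ) :
    Tendsto (fun b => b ^ n * Phi (-b)) atTop (𝓝 0) := by
  refine tendsto_of_tendsto_of_tendsto_of_le_of_le' tendsto_const_nhds
    (tendsto_pow_mul_phi_atTop n) ?_ ?_
  · filter_upwards [eventually_ge_atTop 0] with b hb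
    exact mul_nonneg (pow_nonneg hb n) (Phi_pos _).le
  · filter_upwards [eventually_ge_atTop 1] with b hb
    have h : Phi (-b) ≤ phi b :=
      (le_mul_of_one_le_left (Phi_pos _).le hb).trans (mul_Phi_neg_le_phi b)
    exact mul_le_mul_of_nonneg_left h (by positivity)

section Positivity

variable {b : ℝ}

lemma phi_sub_mul_Phi_neg_pos (hb : 0 ≤ b) : 0 < phi b - b * Phi (-b) := by
  refine pos_of_hasDerivAt_neg_of_tendsto_zero (f := fun x => phi x - x * Phi (-x))
    (f' := fun x => -Phi (-x)) (fun x => ?_)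
    (fun x _ => neg_lt_zero.2 (Phi_pos (-x))) ?_ hb
  · exact ((hasDerivAt_phi x).sub ((hasDerivAt_id x).mul (hasDerivAt_Phi_neg x))).congr_deriv
      (by simp only [id]; ring)
  · simpa using (tendsto_pow_mul_phi_atTop 0).sub (tendsto_pow_mul_Phi_neg_atTop 1)

lemma sq_add_one_mul_Phi_neg_sub_mul_phi_pos (hb : 0 ≤ b) :
    0 < (b ^ 2 + 1) * Phi (-b) - b * phi b := by
  refine pos_of_hasDerivAt_neg_of_tendsto_zero (f := fun x => (x ^ 2 + 1) * Phi (-x) - x * phi x)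
    (f' := fun x => -2 * (phi x - x * Phi (-x)))
    (fun x => ?_) (fun x hx => by linarith [phi_sub_mul_Phi_neg_pos hx.le]) ?_ hb
  · exact ((((hasDerivAt_pow 2 x).add_const 1).mul (hasDerivAt_Phi_neg x)).sub
      ((hasDerivAt_id x).mul (hasDerivAt_phi x))).congr_deriv (by simp only [id]; ring)
  · convert ((tendsto_pow_mul_Phi_neg_atTop 2).add (tendsto_pow_mul_Phi_neg_atTop 0)).sub
      (tendsto_pow_mul_phi_atTop 1) using 1
    · ext x; ring
    · simp

lemma Phi_neg_mul_add_sub_phi_sq_pos (hb : 0 ≤ b) :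
    0 < Phi (-b) * (b * phi b + Phi (-b)) - phi b ^ 2 := by
  refine pos_of_hasDerivAt_neg_of_tendsto_zero
    (f := fun x => Phi (-x) * (x * phi x + Phi (-x)) - phi x ^ 2)
    (f' := fun x => -phi x * ((x ^ 2 + 1) * Phi (-x) - x * phi x)) (fun x => ?_)
    (fun x hx => ?_) ?_ hb
  · exact ((hasDerivAt_Phi_neg x).mul (((hasDerivAt_id x).mul (hasDerivAt_phi x)).add
      (hasDerivAt_Phi_neg x))).sub ((hasDerivAt_phi x).pow 2) |>.congr_deriv
      (by simp only [id, Pi.add_apply, Pi.mul_apply]; ring)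
  · rw [neg_mul, neg_lt_zero]
    exact mul_pos (phi_pos x) (sq_add_one_mul_Phi_neg_sub_mul_phi_pos hx.le)
  · simpa using ((tendsto_pow_mul_Phi_neg_atTop 0).mul ((tendsto_pow_mul_phi_atTop 1).add
      (tendsto_pow_mul_Phi_neg_atTop 0))).sub (tendsto_phi_atTop.pow 2)

end Positivity

lemma F_pos {b : ℝ} (hb : 0 ≤ b) : 0 < F b := by
  rw [F, sub_pos, lt_div_iff₀ (Phi_pos _)]
  linarith [phi_sub_mul_Phi_neg_pos hb]

lemma F_lt_inv {b : ℝ} (hb : 0 < b) : F b < b⁻¹ := by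
  rw [F, sub_lt_iff_lt_add, div_lt_iff₀ (Phi_pos _)]
  refine lt_of_mul_lt_mul_left ?_ hb.le
  calc b * phi b < (b ^ 2 + 1) * Phi (-b) := by
        linarith [sq_add_one_mul_Phi_neg_sub_mul_phi_pos hb.le]
    _ = b * ((b⁻¹ + b) * Phi (-b)) := by field_simp; ring

lemma tendsto_F_atTop : Tendsto F atTop (𝓝 0) :=
  tendsto_of_tendsto_of_tendsto_of_le_of_le' tendsto_const_nhds tendsto_inv_atTop_zero
    ((eventually_ge_atTop 0).mono fun _ hb => (F_pos hb).le)
    ((eventually_gt_atTop 0).mono fun _ hb => (F_lt_inv hb).le)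

lemma hasDerivAt_F (x : ℝ) :
    HasDerivAt F (-(Phi (-x) * (x * phi x + Phi (-x)) - phi x ^ 2) / Phi (-x) ^ 2) x := by
  have hQ := (Phi_pos (-x)).ne'
  refine ((hasDerivAt_phi x).div (hasDerivAt_Phi_neg x) hQ).sub (hasDerivAt_id x)
    |>.congr_deriv ?_
  field_simp
  ring

lemma continuous_F : Continuous F :=
  continuous_iff_continuousAt.2 fun x => (hasDerivAt_F x).continuousAt

lemma F_strictAntiOn : StrictAntiOn F (Ici 0) :=
  strictAntiOn_Ici_of_hasDerivAt_neg hasDerivAt_F fun x hx =>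
    div_neg_of_neg_of_pos (neg_neg_of_pos (Phi_neg_mul_add_sub_phi_sq_pos hx.le))
      (pow_pos (Phi_pos (-x)) 2)

lemma F_zero : F 0 = 2 / Real.sqrt (2 * Real.pi) := by
  rw [F, neg_zero, Phi_zero, phi_zero]
  ring

/-- The restriction of `F` to `(0, ∞)` is a continuous bijection onto
`(0, 2/√(2π))`. -/
theorem F_continuous_bijection :
    ContinuousOn F (Set.Ioi 0) ∧
      Set.BijOn F (Set.Ioi 0) (Set.Ioo 0 (2 / Real.sqrt (2 * Real.pi))) := by
  refine ⟨continuous_F.continuousOn, ?_⟩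
  rw [← F_zero]
  exact F_strictAntiOn.bijOn_Ioi_Ioo continuous_F.continuousOn tendsto_F_atTop
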